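/- For every integer s ≥ 3 there is a constant C depending only on s such that for every positive integer d, every d-dimensional 0-1 matrix P with at least one one, and all integers m ≥ 2 and n ≥ 1, with k = 2^{s−2}+1: lx_k(n,m,F_{P,s},d+1) ≤ C · ex(n,P,d) · m · (1+log₂ m)^{s−3}. -/

import Mathlib

/-! ### Multidimensional 0-1 matrices, represented as the finsets of their one-entries -/

/-- `M` contains `P`: there are coordinatewise strictly increasing maps sending
every one of `P` to a one of `M`. -/
def MContains {d : ℕ} {mdims pdims : Fin d → ℕ}
    (M : Finset ((i : Fin d) → Fin (mdims i)))
    (P : Finset ((i : Fin d) → Fin (pdims i))) : Prop :=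
  ∃ f : (i : Fin d) → (Fin (pdims i) → Fin (mdims i)),
    (∀ i, StrictMono (f i)) ∧ ∀ x ∈ P, (fun i => f i (x i)) ∈ M

/-- `ex(n, P, d)`: the maximum number of ones in a `P`-avoiding `d`-dimensional
0-1 matrix all of whose dimension lengths equal `n`. -/
noncomputable def exSq (n : ℕ) {d : ℕ} {pdims : Fin d → ℕ}
    (P : Finset ((i : Fin d) → Fin (pdims i))) : ℕ :=
  sSup {k | ∃ M : Finset (Fin d → Fin n), ¬ MContains M P ∧ M.card = k}

/-- The groups `G 0, …, G (s-1)` form the structure of a `(P,s)`-formation: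
each group has `P.card` ones, the tails (coordinates other than the first) of each group
form one common set which is a copy of `P` under strictly increasing maps, and the first
coordinates of the groups are strictly ordered between groups. -/
def FormationGroups {d : ℕ} {pdims : Fin d → ℕ}
    (P : Finset ((i : Fin d) → Fin (pdims i))) (s : ℕ) {mdims : Fin (d+1) → ℕ}
    (G : Fin s → Finset ((i : Fin (d+1)) → Fin (mdims i))) : Prop :=
  (∀ a, (G a).card = P.card) ∧
  (∃ g : (i : Fin d) → (Fin (pdims i) → Fin (mdims i.succ)),
      (∀ i, StrictMono (g i)) ∧
      ∀ a, (G a).image Fin.tail = P.image (fun x => fun i => g i (x i))) ∧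
  (∀ a b : Fin s, a < b → ∀ p ∈ G a, ∀ q ∈ G b, p 0 < q 0)

/-- `M` is a `(P,s)`-formation, i.e. a member of `F_{P,s}`. -/
def IsFormation {d : ℕ} {pdims : Fin d → ℕ}
    (P : Finset ((i : Fin d) → Fin (pdims i))) (s : ℕ) {mdims : Fin (d+1) → ℕ}
    (M : Finset ((i : Fin (d+1)) → Fin (mdims i))) : Prop :=
  ∃ G : Fin s → Finset ((i : Fin (d+1)) → Fin (mdims i)),
    FormationGroups P s G ∧ M = Finset.univ.biUnion G

/-- `M` contains a `(P,s)`-formation, i.e. `M` contains some member of the family `F_{P,s}`. -/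
def ContainsFormation {d : ℕ} {pdims : Fin d → ℕ}
    (P : Finset ((i : Fin d) → Fin (pdims i))) (s : ℕ) {mdims : Fin (d+1) → ℕ}
    (M : Finset ((i : Fin (d+1)) → Fin (mdims i))) : Prop :=
  ∃ G : Fin s → Finset ((i : Fin (d+1)) → Fin (mdims i)),
    FormationGroups P s G ∧ ∀ a, G a ⊆ M

/-- `ex(n, F_{P,s}, d+1)`: the maximum number of ones in a `(d+1)`-dimensional 0-1 matrix
with all dimension lengths `n` avoiding every `(P,s)`-formation. -/
noncomputable def exFormation (n : ℕ) {d : ℕ} {pdims : Fin d → ℕ}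
    (P : Finset ((i : Fin d) → Fin (pdims i))) (s : ℕ) : ℕ :=
  sSup {k | ∃ M : Finset (Fin (d+1) → Fin n), ¬ ContainsFormation P s M ∧ M.card = k}

/-- Dimension lengths of a box whose first dimension has length `m` and whose
other `d` dimensions have length `n`. -/
def BoxDims (d m n : ℕ) : Fin (d+1) → ℕ := Fin.cons m (fun _ => n)

/-- `L` is a valid family of letters: pairwise disjoint nonempty sets of cells, each with
at least `k` cells all lying in a single 1-row. -/
def IsLetterFamily {d : ℕ} {mdims : Fin (d+1) → ℕ} (k : ℕ)
    (L : Finset (Finset ((i : Fin (d+1)) → Fin (mdims i)))) : Prop :=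
  (∀ S ∈ L, S.Nonempty) ∧
  (∀ S ∈ L, ∀ T ∈ L, S ≠ T → Disjoint S T) ∧
  (∀ S ∈ L, k ≤ S.card ∧ ∃ t : (i : Fin d) → Fin (mdims i.succ), ∀ p ∈ S, Fin.tail p = t)

/-- `lx_k(n, m, F_{P,s}, d+1)`. -/
noncomputable def lxFormation (n m : ℕ) {d : ℕ} {pdims : Fin d → ℕ}
    (P : Finset ((i : Fin d) → Fin (pdims i))) (s k : ℕ) : ℕ :=
  sSup {c | ∃ L : Finset (Finset ((i : Fin (d+1)) → Fin (BoxDims d m n i))),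
    IsLetterFamily k L ∧ ¬ ContainsFormation P s (L.biUnion id) ∧ L.card = c}

/-! ### general families of multidimensional matrices -/

/-- `M` avoids every member of the family `F`. -/
def AvoidsFam {d : ℕ} {mdims : Fin d → ℕ} (M : Finset ((i : Fin d) → Fin (mdims i)))
    (F : (pdims : Fin d → ℕ) → Set (Finset ((i : Fin d) → Fin (pdims i)))) : Prop :=
  ∀ pdims : Fin d → ℕ, ∀ P ∈ F pdims, ¬ MContains M P

/-- `ex(n, m, F, d)` with `d = e+1`. -/
noncomputable def exBox (n m e : ℕ)
    (F : (pdims : Fin (e+1) → ℕ) → Set (Finset ((i : Fin (e+1)) → Fin (pdims i)))) : ℕ :=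
  sSup {k | ∃ M : Finset ((i : Fin (e+1)) → Fin (BoxDims e m n i)),
    AvoidsFam M F ∧ M.card = k}

/-- `lx_k(n, m, F, d)` with `d = e+1`. -/
noncomputable def lxBox (n m e k : ℕ)
    (F : (pdims : Fin (e+1) → ℕ) → Set (Finset ((i : Fin (e+1)) → Fin (pdims i)))) : ℕ :=
  sSup {c | ∃ L : Finset (Finset ((i : Fin (e+1)) → Fin (BoxDims e m n i))),
    IsLetterFamily k L ∧ AvoidsFam (L.biUnion id) F ∧ L.card = c}

/-! ### 2-dimensional matrices (cells are (row, column) pairs) -/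

def Contains2 {m n a b : ℕ} (M : Finset (Fin m × Fin n)) (P : Finset (Fin a × Fin b)) : Prop :=
  ∃ f : Fin a → Fin m, ∃ g : Fin b → Fin n,
    StrictMono f ∧ StrictMono g ∧ ∀ p ∈ P, (f p.1, g p.2) ∈ M

def Avoids2Fam {m n : ℕ} (M : Finset (Fin m × Fin n))
    (F : (a : ℕ) → (b : ℕ) → Set (Finset (Fin a × Fin b))) : Prop :=
  ∀ a b : ℕ, ∀ P ∈ F a b, ¬ Contains2 M P

/-- `ex(n, m, F)` for a family `F` of 2-dimensional matrices: `m` rows, `n` columns. -/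
noncomputable def ex2 (n m : ℕ) (F : (a : ℕ) → (b : ℕ) → Set (Finset (Fin a × Fin b))) : ℕ :=
  sSup {k | ∃ M : Finset (Fin m × Fin n), Avoids2Fam M F ∧ M.card = k}

/-- letters in a 2-dimensional grid: pairwise disjoint nonempty sets of cells, each with
at least `k` cells all lying in a single column. -/
def IsLetterCol {m n : ℕ} (k : ℕ) (L : Finset (Finset (Fin m × Fin n))) : Prop :=
  (∀ S ∈ L, S.Nonempty) ∧
  (∀ S ∈ L, ∀ T ∈ L, S ≠ T → Disjoint S T) ∧
  (∀ S ∈ L, k ≤ S.card ∧ ∃ j : Fin n, ∀ p ∈ S, p.2 = j)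

/-- `A_t`: the 2×t 0-1 matrix with ones exactly where the coordinate sum is even. -/
def Aform (t : ℕ) : Finset (Fin 2 × Fin t) :=
  Finset.univ.filter (fun p => Even ((p.1 : ℕ) + (p.2 : ℕ)))

/-! ### Ackermann hierarchy and related functions -/

/-- `ackH j n` is `a_j(n)`: `a₁(n) = 2n` and `a_j(n)` is the `n`-fold iterate
of `a_{j-1}` applied to `1`. -/
def ackH : ℕ → ℕ → ℕ
  | 0, n => n
  | 1, n => 2 * n
  | j+2, n => (ackH (j+1))^[n] 1

/-- `α_j(n) = min {k ≥ 1 : a_j(k) ≥ n}`. -/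
noncomputable def alphIdx (j n : ℕ) : ℕ := sInf {k | 1 ≤ k ∧ n ≤ ackH j k}

/-- inverse diagonal Ackermann function `α(n) = min {k ≥ 1 : A(k,k) ≥ n}`. -/
noncomputable def alphA (n : ℕ) : ℕ := sInf {k | 1 ≤ k ∧ n ≤ ack k k}

/-- `R_s(j)`. -/
def Rform : ℕ → ℕ → ℤ
  | 0, _ => 0
  | 1, _ => 2
  | 2, _ => 3
  | _+3, 0 => 0
  | _+3, 1 => 0
  | t+3, 2 => 2 ^ (t+2) + 1
  | t+3, i+3 =>
      Rform (t+3) (i+2) * Rform (t+1) (i+3) + 2 * Rform (t+2) (i+3)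
        - 3 * Rform (t+1) (i+3) - Rform (t+3) (i+2) + 2
termination_by s j => (s, j)

/-- `D_s(j)`. -/
def Dform : ℕ → ℕ → ℤ
  | 0, _ => 0
  | 1, _ => 0
  | 2, _ => 2
  | _+3, 0 => 0
  | _+3, 1 => 0
  | t+3, 2 => 2 ^ (t+2) + 2 ^ (t+1) - 1
  | t+3, i+3 =>
      2 * Dform (t+2) (i+3) + (Dform (t+1) (i+3) + 1) * (Rform (t+3) (i+2) - 3)
        + Dform (t+3) (i+2) - Rform (t+3) (i+2) + 1
termination_by s j => (s, j)

/-- The ones of the 2-dimensional matrix `M` contain a doubled `(r,s)`-formation. -/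
def ContainsDoubled (r s : ℕ) {m n : ℕ} (M : Finset (Fin m × Fin n)) : Prop :=
  ∃ S ⊆ M, ∃ b : Fin (s+1) → ℕ, Monotone b ∧ b 0 = 0 ∧ b (Fin.last s) = m ∧
    ∃ C : Finset (Fin n), C.card = r ∧ (∀ p ∈ S, p.2 ∈ C) ∧
      S.card = r * (2 * s - 2) ∧
      ∀ c ∈ C, ∀ t : Fin s,
        (S.filter (fun p => p.2 = c ∧ b t.castSucc ≤ (p.1 : ℕ) ∧ (p.1 : ℕ) < b t.succ)).card
          = if (t : ℕ) = 0 ∨ (t : ℕ) = s - 1 then 1 else 2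


/-! Split the first dimension of the box into two halves. A letter either lies in one half, or
meets both; in the latter case it has at least `k' = 2^{s-3}+1` cells in one of the halves,
because `2k' ≤ k + 1`. Restricted to that half, these letters avoid `(P,s-1)`-formations: each
1-row of such a formation carries a letter with a cell in the other half, and those cells form
an extra group turning it into a `(P,s)`-formation. Hence `lx_s(m) ≤ lx_s(m₁) + lx_s(m₂) +
lx_{s-1}(m₁) + lx_{s-1}(m₂)` (with the matching `k`), which unrolls to
`ex(n,P) · m · (1 + j)^{s-3}` for `m ≤ 2^j`.

For `s = 3` each letter has a cell with cells of the same letter before and after it in its 1-row.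
For fixed first coordinate, the 1-rows of such cells avoid `P`: otherwise these cells and their
neighbours would form a `(P,3)`-formation. So there are at most `ex(n,P) · m` letters. -/

open Finset

theorem Finset.exists_lt_lt_of_two_lt_card {α : Type*} [LinearOrder α] {s : Finset α}
    (hs : 2 < #s) : ∃ a ∈ s, ∃ b ∈ s, ∃ c ∈ s, a < b ∧ b < c := by
  have hne : s.Nonempty := card_pos.mp (by omega)
  obtain ⟨b, hb⟩ : ((s.erase (s.min' hne)).erase (s.max' hne)).Nonempty := by
    apply card_pos.mp
    have h₁ := pred_card_le_card_erase (s := s.erase (s.min' hne)) (a := s.max' hne)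
    have h₂ := pred_card_le_card_erase (s := s) (a := s.min' hne)
    omega
  obtain ⟨hbmax, hbmin, hbs⟩ : b ≠ s.max' hne ∧ b ≠ s.min' hne ∧ b ∈ s := by
    simpa only [mem_erase] using hb
  exact ⟨_, s.min'_mem hne, b, hbs, _, s.max'_mem hne,
    lt_of_le_of_ne (s.min'_le b hbs) hbmin.symm, lt_of_le_of_ne (s.le_max' b hbs) hbmax⟩

theorem Fin.eq_of_zero_eq_of_tail_eq {d : ℕ} {α : Fin (d + 1) → Type*}
    {p q : (i : Fin (d + 1)) → α i} (h₀ : p 0 = q 0) (ht : Fin.tail p = Fin.tail q) : p = q :=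
  funext fun i => Fin.cases h₀ (fun j => congrFun ht j) i

section FormationSelection

variable {d : ℕ} {pdims : Fin d → ℕ} {mdims : Fin (d + 1) → ℕ}
  {P : Finset ((i : Fin d) → Fin (pdims i))} {s : ℕ}

/-- `c a y` is the one of the `a`-th group of a `(P,s)`-formation that lies in the 1-row
`g ∘ y` of the one `y` of `P`. -/
def FormationSelection (P : Finset ((i : Fin d) → Fin (pdims i)))
    (g : (i : Fin d) → Fin (pdims i) → Fin (mdims i.succ))
    (c : Fin s → P → (i : Fin (d + 1)) → Fin (mdims i)) : Prop :=
  (∀ i, StrictMono (g i)) ∧ (∀ a y, Fin.tail (c a y) = fun i => g i (y.1 i)) ∧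
    ∀ a b, a < b → ∀ y y', c a y 0 < c b y' 0

theorem containsFormation_iff {M : Finset ((i : Fin (d + 1)) → Fin (mdims i))} :
    ContainsFormation P s M ↔
      ∃ g c, FormationSelection P (s := s) g c ∧ ∀ a y, c a y ∈ M := by
  constructor
  · rintro ⟨G, ⟨-, ⟨g, hg, htail⟩, hord⟩, hGM⟩
    have hrow (a) (y : P) : ∃ q ∈ G a, Fin.tail q = fun i => g i (y.1 i) :=
      mem_image.mp (htail a ▸ mem_image_of_mem _ y.2)
    choose c hcG hct using hrow
    exact ⟨g, c, ⟨hg, hct, fun a b hab y y' => hord a b hab _ (hcG a y) _ (hcG b y')⟩,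
      fun a y => hGM a (hcG a y)⟩
  · rintro ⟨g, c, ⟨hg, hct, hord⟩, hcM⟩
    have hinj (a) : Function.Injective (c a) := fun y y' h =>
      Subtype.ext <| funext fun i => (hg i).injective <|
        congrFun ((hct a y).symm.trans ((congrArg Fin.tail h).trans (hct a y'))) i
    refine ⟨fun a => univ.image (c a), ⟨fun a => ?_, ⟨g, hg, fun a => ?_⟩, ?_⟩, ?_⟩
    · rw [card_image_of_injective _ (hinj a), card_univ, Fintype.card_coe]
    · ext z
      simp [hct]
    · simp only [mem_image, mem_univ, true_and]
      rintro a b hab _ ⟨y, rfl⟩ _ ⟨y', rfl⟩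
      exact hord a b hab y y'
    · simpa only [image_subset_iff, mem_univ, true_implies] using hcM

theorem ContainsFormation.mono {M M' : Finset ((i : Fin (d + 1)) → Fin (mdims i))}
    (h : ContainsFormation P s M) (hMM' : M ⊆ M') : ContainsFormation P s M' :=
  let ⟨G, hG, hGM⟩ := h
  ⟨G, hG, fun a => (hGM a).trans hMM'⟩

variable {g : (i : Fin d) → Fin (pdims i) → Fin (mdims i.succ)}
  {c : Fin s → P → (i : Fin (d + 1)) → Fin (mdims i)}
  {new : P → (i : Fin (d + 1)) → Fin (mdims i)}

theorem FormationSelection.snoc (hc : FormationSelection P g c)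
    (hrow : ∀ y, Fin.tail (new y) = fun i => g i (y.1 i)) (hlt : ∀ a y y', c a y 0 < new y' 0) :
    FormationSelection P g (Fin.snoc (α := fun _ => P → _) c new) := by
  obtain ⟨hg, hct, hord⟩ := hc
  refine ⟨hg, fun a => ?_, fun a b hab => ?_⟩
  · induction a using Fin.lastCases with
    | last => simpa using hrow
    | cast a => simpa using hct a
  induction b using Fin.lastCases with
  | last =>
    obtain ⟨a, rfl⟩ := Fin.exists_castSucc_eq.mpr (ne_of_lt hab)
    simpa using hlt a
  | cast b =>
    obtain ⟨a, rfl⟩ :=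
      Fin.exists_castSucc_eq.mpr (ne_of_lt (hab.trans (Fin.castSucc_lt_last b)))
    simpa using hord a b (Fin.castSucc_lt_castSucc_iff.mp hab)

theorem FormationSelection.cons (hc : FormationSelection P g c)
    (hrow : ∀ y, Fin.tail (new y) = fun i => g i (y.1 i)) (hlt : ∀ a y y', new y 0 < c a y' 0) :
    FormationSelection P g (Fin.cons (α := fun _ => P → _) new c) := by
  obtain ⟨hg, hct, hord⟩ := hc
  refine ⟨hg, fun a => ?_, fun a b hab => ?_⟩
  · induction a using Fin.cases with
    | zero => simpa using hrow
    | succ a => simpa using hct a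
  induction a using Fin.cases with
  | zero =>
    obtain ⟨b, rfl⟩ := Fin.exists_succ_eq.mpr (ne_of_gt hab)
    simpa using hlt b
  | succ a =>
    obtain ⟨b, rfl⟩ := Fin.exists_succ_eq.mpr (ne_of_gt ((Fin.succ_pos a).trans hab))
    simpa using hord a b (Fin.succ_lt_succ_iff.mp hab)

end FormationSelection

namespace IsLetterFamily

variable {d : ℕ} {mdims : Fin (d + 1) → ℕ} {k : ℕ}
  {L L' : Finset (Finset ((i : Fin (d + 1)) → Fin (mdims i)))}
  {S T : Finset ((i : Fin (d + 1)) → Fin (mdims i))} {p q : (i : Fin (d + 1)) → Fin (mdims i)}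

theorem subset (hL : IsLetterFamily k L) (hL' : L' ⊆ L) : IsLetterFamily k L' :=
  ⟨fun S hS => hL.1 S (hL' hS), fun S hS T hT => hL.2.1 S (hL' hS) T (hL' hT),
    fun S hS => hL.2.2 S (hL' hS)⟩

theorem eq_of_mem_of_mem (hL : IsLetterFamily k L) (hS : S ∈ L) (hT : T ∈ L) (hpS : p ∈ S)
    (hpT : p ∈ T) : S = T := by
  by_contra hST
  exact disjoint_left.mp (hL.2.1 S hS T hT hST) hpS hpT

theorem tail_eq (hL : IsLetterFamily k L) (hS : S ∈ L) (hp : p ∈ S) (hq : q ∈ S) :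
    Fin.tail p = Fin.tail q := by
  obtain ⟨-, t, ht⟩ := hL.2.2 S hS
  rw [ht p hp, ht q hq]

theorem injOn_zero (hL : IsLetterFamily k L) (hS : S ∈ L) :
    Set.InjOn (fun p : (i : Fin (d + 1)) → Fin (mdims i) => p 0) S :=
  fun _ hp _ hq h => Fin.eq_of_zero_eq_of_tail_eq h (hL.tail_eq hS hp hq)

theorem card_le (hL : IsLetterFamily k L) (hS : S ∈ L) : #S ≤ mdims 0 := by
  rw [← card_image_of_injOn (hL.injOn_zero hS)]
  simpa using card_le_univ (S.image fun p => p 0)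

end IsLetterFamily

abbrev BoxCell (d m n : ℕ) := (i : Fin (d + 1)) → Fin (BoxDims d m n i)

section Extremal

variable {d n m s k : ℕ} {pdims : Fin d → ℕ} {P : Finset ((i : Fin d) → Fin (pdims i))}

theorem le_lxFormation {L : Finset (Finset (BoxCell d m n))} (hL : IsLetterFamily k L)
    (hLP : ¬ ContainsFormation P s (L.biUnion id)) : #L ≤ lxFormation n m P s k := by
  refine le_csSup ⟨Fintype.card (Finset (BoxCell d m n)), ?_⟩ ⟨L, hL, hLP, rfl⟩
  rintro c ⟨L', -, -, rfl⟩
  exact card_le_univ L'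

theorem lxFormation_le {b : ℕ}
    (h : ∀ L : Finset (Finset (BoxCell d m n)), IsLetterFamily k L →
      ¬ ContainsFormation P s (L.biUnion id) → #L ≤ b) :
    lxFormation n m P s k ≤ b := by
  rcases Set.eq_empty_or_nonempty {c | ∃ L : Finset (Finset (BoxCell d m n)),
      IsLetterFamily k L ∧ ¬ ContainsFormation P s (L.biUnion id) ∧ #L = c} with he | hne
  · rw [lxFormation, he, csSup_empty]
    exact Nat.zero_le b
  · refine csSup_le hne ?_
    rintro c ⟨L, hL, hLP, rfl⟩
    exact h L hL hLP

theorem card_le_exSq {M : Finset (Fin d → Fin n)} (hM : ¬ MContains M P) : #M ≤ exSq n P := by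
  refine le_csSup ⟨Fintype.card (Fin d → Fin n), ?_⟩ ⟨M, hM, rfl⟩
  rintro c ⟨M', -, rfl⟩
  exact card_le_univ M'

theorem lxFormation_eq_zero_of_lt (hmk : m < k) : lxFormation n m P s k = 0 := by
  refine Nat.le_zero.mp (lxFormation_le fun L hL _ => ?_)
  rw [Nat.le_zero, card_eq_zero, eq_empty_iff_forall_notMem]
  intro S hS
  have hSm : #S ≤ m := hL.card_le hS
  have hkS : k ≤ #S := (hL.2.2 S hS).1
  omega

end Extremal

namespace BoxCell

variable {d n m m' : ℕ} (e : Fin m' ↪o Fin m)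

def reindex (q : BoxCell d m' n) : BoxCell d m n :=
  Fin.cons (e (q 0)) (Fin.tail q : Fin d → Fin n)

theorem reindex_injective : Function.Injective (reindex (d := d) (n := n) e) := fun _ _ h =>
  Fin.eq_of_zero_eq_of_tail_eq (e.injective (congrFun h 0)) (funext fun i => congrFun h i.succ)

theorem mem_range_reindex {p : BoxCell d m n} :
    p ∈ Set.range (reindex e) ↔ p 0 ∈ Set.range e := by
  constructor
  · rintro ⟨q, rfl⟩
    exact ⟨q 0, rfl⟩
  · rintro ⟨x, hx⟩
    exact ⟨Fin.cons x (Fin.tail p : Fin d → Fin n), Fin.eq_of_zero_eq_of_tail_eq hx rfl⟩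

noncomputable def restrict (S : Finset (BoxCell d m n)) : Finset (BoxCell d m' n) :=
  S.preimage (reindex e) (reindex_injective e).injOn

variable {e}

@[simp]
theorem mem_restrict {S : Finset (BoxCell d m n)} {q : BoxCell d m' n} :
    q ∈ restrict e S ↔ reindex e q ∈ S :=
  mem_preimage

theorem mem_biUnion_image_restrict {L : Finset (Finset (BoxCell d m n))} {q : BoxCell d m' n} :
    q ∈ (L.image (restrict e)).biUnion id ↔ ∃ S ∈ L, reindex e q ∈ S := by
  simp

theorem card_restrict_castLE_add_card_restrict_natAdd {m₁ m₂ : ℕ}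
    (S : Finset (BoxCell d (m₁ + m₂) n)) :
    #(restrict (Fin.castLEOrderEmb (Nat.le_add_right m₁ m₂)) S) +
      #(restrict (Fin.natAddOrderEmb m₁ : Fin m₂ ↪o Fin (m₁ + m₂)) S) = #S := by
  classical
  rw [restrict, restrict, card_preimage, card_preimage,
    ← card_filter_add_card_filter_not (s := S) (fun p => (p 0 : ℕ) < m₁)]
  congr 2 <;> refine filter_congr fun p _ => ?_ <;> rw [mem_range_reindex]
  · change (p 0 : Fin (m₁ + m₂)) ∈ Set.range (Fin.castLE (Nat.le_add_right m₁ m₂)) ↔ _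
    rw [Fin.range_castLE]
    rfl
  · change (p 0 : Fin (m₁ + m₂)) ∈ Set.range (Fin.natAdd m₁) ↔ _
    rw [Fin.range_natAdd]
    exact not_lt (a := (p 0 : ℕ)).symm

end BoxCell

open BoxCell

variable {d n m m' : ℕ} {pdims : Fin d → ℕ} {P : Finset ((i : Fin d) → Fin (pdims i))}
  {s k k' : ℕ} {e : Fin m' ↪o Fin m} {L : Finset (Finset (BoxCell d m n))}

theorem FormationSelection.reindex {g : (i : Fin d) → Fin (pdims i) → Fin n}
    {c : Fin s → P → BoxCell d m' n} (hc : FormationSelection P g c) (e : Fin m' ↪o Fin m) :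
    FormationSelection P g fun a y => reindex e (c a y) :=
  ⟨hc.1, hc.2.1, fun a b hab y y' => e.strictMono (hc.2.2 a b hab y y')⟩

namespace IsLetterFamily

theorem image_restrict (hL : IsLetterFamily k L) (hk' : 0 < k')
    (hcard : ∀ S ∈ L, k' ≤ #(restrict e S)) : IsLetterFamily k' (L.image (restrict e)) := by
  simp only [IsLetterFamily, forall_mem_image]
  refine ⟨fun S hS => card_pos.mp (hk'.trans_le (hcard S hS)), fun S hS T hT hST => ?_,
    fun S hS => ⟨hcard S hS, ?_⟩⟩
  · refine disjoint_left.mpr fun q hqS hqT => hST ?_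
    rw [hL.eq_of_mem_of_mem hS hT (mem_restrict.mp hqS) (mem_restrict.mp hqT)]
  · obtain ⟨-, t, ht⟩ := hL.2.2 S hS
    exact ⟨t, fun q hq => ht _ (mem_restrict.mp hq)⟩

theorem injOn_restrict (hL : IsLetterFamily k L) (hne : ∀ S ∈ L, (restrict e S).Nonempty) :
    Set.InjOn (restrict e) (L : Set (Finset (BoxCell d m n))) := fun S hS _ hT hST =>
  let ⟨_, hq⟩ := hne S hS
  hL.eq_of_mem_of_mem hS hT (mem_restrict.mp hq) (mem_restrict.mp (hST ▸ hq))

theorem exists_rowmate {m'' : ℕ} {e' : Fin m'' ↪o Fin m} (hL : IsLetterFamily k L)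
    (he' : ∀ S ∈ L, (restrict e' S).Nonempty) {q : BoxCell d m' n}
    (hq : q ∈ (L.image (restrict e)).biUnion id) :
    ∃ r ∈ L.biUnion id, Fin.tail r = Fin.tail (reindex e q) ∧ r 0 ∈ Set.range e' := by
  obtain ⟨S, hS, hqS⟩ := mem_biUnion_image_restrict.mp hq
  obtain ⟨r, hr⟩ := he' S hS
  exact ⟨reindex e' r, mem_biUnion.mpr ⟨S, hS, mem_restrict.mp hr⟩,
    hL.tail_eq hS (mem_restrict.mp hr) hqS, r 0, rfl⟩

end IsLetterFamily

theorem card_le_lxFormation_of_restrict (hL : IsLetterFamily k L) (hk' : 0 < k')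
    (hcard : ∀ S ∈ L, k' ≤ #(restrict e S))
    (hLP : ¬ ContainsFormation P s ((L.image (restrict e)).biUnion id)) :
    #L ≤ lxFormation n m' P s k' := by
  have hne (S) (hS : S ∈ L) : (restrict e S).Nonempty := card_pos.mp (hk'.trans_le (hcard S hS))
  rw [← card_image_of_injOn (hL.injOn_restrict hne)]
  exact le_lxFormation (hL.image_restrict hk' hcard) hLP

namespace ContainsFormation

theorem of_restrict (h : ContainsFormation P s ((L.image (restrict e)).biUnion id)) :
    ContainsFormation P s (L.biUnion id) := by
  obtain ⟨g, c, hc, hcM⟩ := containsFormation_iff.mp h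
  exact containsFormation_iff.mpr
    ⟨g, _, hc.reindex e, fun a y => by simpa using hcM a y⟩

variable {m₁ m₂ : ℕ} {e₁ : Fin m₁ ↪o Fin m} {e₂ : Fin m₂ ↪o Fin m}

theorem snoc_of_restrict (h₁₂ : ∀ x y, e₁ x < e₂ y) (hL : IsLetterFamily k L)
    (h₂ : ∀ S ∈ L, (restrict e₂ S).Nonempty) (hs : 0 < s)
    (h : ContainsFormation P s ((L.image (restrict e₁)).biUnion id)) :
    ContainsFormation P (s + 1) (L.biUnion id) := by
  obtain ⟨g, c, hc, hcM⟩ := containsFormation_iff.mp h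
  choose r hrM hrt hr₂ using fun y => hL.exists_rowmate h₂ (hcM ⟨0, hs⟩ y)
  refine containsFormation_iff.mpr ⟨g, _, (hc.reindex e₁).snoc (new := r)
    (fun y => (hrt y).trans (hc.2.1 _ y)) fun a y y' => ?_, fun a y => ?_⟩
  · obtain ⟨x, hx⟩ := hr₂ y'
    rw [← hx]
    exact h₁₂ _ x
  · induction a using Fin.lastCases with
    | last => simpa using hrM y
    | cast a => simpa using hcM a y

theorem cons_of_restrict (h₁₂ : ∀ x y, e₁ x < e₂ y) (hL : IsLetterFamily k L)
    (h₁ : ∀ S ∈ L, (restrict e₁ S).Nonempty) (hs : 0 < s)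
    (h : ContainsFormation P s ((L.image (restrict e₂)).biUnion id)) :
    ContainsFormation P (s + 1) (L.biUnion id) := by
  obtain ⟨g, c, hc, hcM⟩ := containsFormation_iff.mp h
  choose r hrM hrt hr₁ using fun y => hL.exists_rowmate h₁ (hcM ⟨0, hs⟩ y)
  refine containsFormation_iff.mpr ⟨g, _, (hc.reindex e₂).cons (new := r)
    (fun y => (hrt y).trans (hc.2.1 _ y)) fun a y y' => ?_, fun a y => ?_⟩
  · obtain ⟨x, hx⟩ := hr₁ y
    rw [← hx]
    exact h₁₂ x _
  · induction a using Fin.cases with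
    | zero => simpa using hrM y
    | succ a => simpa using hcM a y

end ContainsFormation

theorem lxFormation_add_le {m₁ m₂ : ℕ} (hs : 0 < s) (hk' : 0 < k') (hkk' : 2 * k' ≤ k + 1) :
    lxFormation n (m₁ + m₂) P (s + 1) k ≤
      lxFormation n m₁ P (s + 1) k + lxFormation n m₂ P (s + 1) k +
        lxFormation n m₁ P s k' + lxFormation n m₂ P s k' := by
  refine lxFormation_le fun L hL hLP => ?_
  set e₁ := Fin.castLEOrderEmb (Nat.le_add_right m₁ m₂)
  set e₂ : Fin m₂ ↪o Fin (m₁ + m₂) := Fin.natAddOrderEmb m₁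
  have h₁₂ (x y) : e₁ x < e₂ y := by
    simp only [e₁, e₂, Fin.castLEOrderEmb_apply, Fin.natAddOrderEmb_apply, Fin.lt_def,
      Fin.val_castLE, Fin.val_natAdd]
    omega
  have hk (S) (hS : S ∈ L) : k ≤ #(restrict e₁ S) + #(restrict e₂ S) :=
    (card_restrict_castLE_add_card_restrict_natAdd S).symm ▸ (hL.2.2 S hS).1
  have hsub {p : Finset (BoxCell d (m₁ + m₂) n) → Prop} [DecidablePred p] :
      (L.filter p).biUnion id ⊆ L.biUnion id :=
    biUnion_subset_biUnion_of_subset_left _ (filter_subset _ _)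
  have hL' {p : Finset (BoxCell d (m₁ + m₂) n) → Prop} [DecidablePred p] :
      IsLetterFamily k (L.filter p) :=
    hL.subset (filter_subset _ _)
  set A := L.filter fun S => k ≤ #(restrict e₁ S)
  set B := L.filter fun S => k ≤ #(restrict e₂ S)
  set C := L.filter fun S => 0 < #(restrict e₂ S) ∧ k' ≤ #(restrict e₁ S)
  set D := L.filter fun S => 0 < #(restrict e₁ S) ∧ k' ≤ #(restrict e₂ S)
  have hcover : #L ≤ #A + #B + #C + #D := by
    calc #L ≤ #(A ∪ B ∪ C ∪ D) := card_le_card fun S hS => by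
          have := hk S hS
          simp only [A, B, C, D, mem_union, mem_filter, hS, true_and]
          omega
      _ ≤ #A + #B + #C + #D := by grw [card_union_le, card_union_le, card_union_le]
  have hA : #A ≤ lxFormation n m₁ P (s + 1) k :=
    card_le_lxFormation_of_restrict hL' (by omega) (fun S hS => (mem_filter.mp hS).2)
      fun h => hLP (h.of_restrict.mono hsub)
  have hB : #B ≤ lxFormation n m₂ P (s + 1) k :=
    card_le_lxFormation_of_restrict hL' (by omega) (fun S hS => (mem_filter.mp hS).2)
      fun h => hLP (h.of_restrict.mono hsub)
  have hC : #C ≤ lxFormation n m₁ P s k' :=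
    card_le_lxFormation_of_restrict hL' hk' (fun S hS => (mem_filter.mp hS).2.2)
      fun h => hLP ((h.snoc_of_restrict h₁₂ hL'
        (fun S hS => card_pos.mp (mem_filter.mp hS).2.1) hs).mono hsub)
  have hD : #D ≤ lxFormation n m₂ P s k' :=
    card_le_lxFormation_of_restrict hL' hk' (fun S hS => (mem_filter.mp hS).2.2)
      fun h => hLP ((h.cons_of_restrict h₁₂ hL'
        (fun S hS => card_pos.mp (mem_filter.mp hS).2.1) hs).mono hsub)
  omega

section RowInterior

variable {d : ℕ} {mdims : Fin (d + 1) → ℕ}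

def rowInterior (M : Finset ((i : Fin (d + 1)) → Fin (mdims i))) :
    Finset ((i : Fin (d + 1)) → Fin (mdims i)) :=
  M.filter fun q => (∃ p ∈ M, Fin.tail p = Fin.tail q ∧ p 0 < q 0) ∧
    ∃ r ∈ M, Fin.tail r = Fin.tail q ∧ q 0 < r 0

theorem IsLetterFamily.card_le_card_rowInterior {k : ℕ}
    {L : Finset (Finset ((i : Fin (d + 1)) → Fin (mdims i)))} (hL : IsLetterFamily k L)
    (hk : 3 ≤ k) : #L ≤ #(rowInterior (L.biUnion id)) := by
  refine card_le_card_of_forall_subsingleton (fun S q => q ∈ S) (fun S hS => ?_)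
    fun q _ S ⟨hS, hqS⟩ T ⟨hT, hqT⟩ => hL.eq_of_mem_of_mem hS hT hqS hqT
  have h3 : 2 < #(S.image fun p => p 0) := by
    rw [card_image_of_injOn (hL.injOn_zero hS)]
    exact hk.trans (hL.2.2 S hS).1
  obtain ⟨_, ha, _, hb, _, hc, hab, hbc⟩ := exists_lt_lt_of_two_lt_card h3
  obtain ⟨p, hp, rfl⟩ := mem_image.mp ha
  obtain ⟨q, hq, rfl⟩ := mem_image.mp hb
  obtain ⟨r, hr, rfl⟩ := mem_image.mp hc
  have hM {x} (hx : x ∈ S) : x ∈ L.biUnion id := mem_biUnion.mpr ⟨S, hS, hx⟩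
  exact ⟨q, mem_filter.mpr ⟨hM hq, ⟨p, hM hp, hL.tail_eq hS hp hq, hab⟩,
    ⟨r, hM hr, hL.tail_eq hS hr hq, hbc⟩⟩, hq⟩

end RowInterior

section Three

variable {M : Finset (BoxCell d m n)}

theorem card_filter_rowInterior_le_exSq (hM : ¬ ContainsFormation P 3 M) (x : Fin m) :
    #((rowInterior M).filter fun q => q 0 = x) ≤ exSq n P := by
  set Q := (rowInterior M).filter fun q => q 0 = x
  have hQ (q) (hq : q ∈ Q) : q ∈ M ∧ q 0 = x ∧
      (∃ p ∈ M, Fin.tail p = Fin.tail q ∧ p 0 < x) ∧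
      ∃ r ∈ M, Fin.tail r = Fin.tail q ∧ x < r 0 := by
    obtain ⟨⟨hqM, hp, hr⟩, rfl⟩ := by simpa only [Q, rowInterior, mem_filter] using hq
    exact ⟨hqM, rfl, hp, hr⟩
  have hinj : Set.InjOn Fin.tail (Q : Set (BoxCell d m n)) := fun p hp q hq h =>
    Fin.eq_of_zero_eq_of_tail_eq ((hQ p hp).2.1.trans (hQ q hq).2.1.symm) h
  rw [← card_image_of_injOn hinj]
  refine card_le_exSq fun ⟨f, hf, hfP⟩ => hM ?_
  have hrow (y : P) : ∃ q ∈ Q, Fin.tail q = fun i => f i (y.1 i) := mem_image.mp (hfP y.1 y.2)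
  choose q hqQ hqt using hrow
  have hqx (y) : q y 0 = x := (hQ _ (hqQ y)).2.1
  choose p hpM hpt hpx using fun y => (hQ _ (hqQ y)).2.2.1
  choose r hrM hrt hrx using fun y => (hQ _ (hqQ y)).2.2.2
  refine containsFormation_iff.mpr
    ⟨f, ![p, q, r], ⟨hf, fun a y => ?_, fun a b hab y y' => ?_⟩, fun a y => ?_⟩
  · fin_cases a
    exacts [(hpt y).trans (hqt y), hqt y, (hrt y).trans (hqt y)]
  · fin_cases a <;> fin_cases b <;> try exact absurd hab (by decide)
    exacts [(hpx y).trans_eq (hqx y').symm, (hpx y).trans (hrx y'), (hqx y).trans_lt (hrx y')]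
  · fin_cases a
    exacts [hpM y, (hQ _ (hqQ y)).1, hrM y]

theorem card_rowInterior_le (hM : ¬ ContainsFormation P 3 M) :
    #(rowInterior M) ≤ exSq n P * m := by
  refine (card_le_mul_card_image (f := fun q : BoxCell d m n => (q 0 : Fin m)) _ _
    fun x _ => card_filter_rowInterior_le_exSq hM x).trans ?_
  exact Nat.mul_le_mul_left _ ((card_le_univ _).trans_eq (Fintype.card_fin m))

theorem lxFormation_three_le (hk : 3 ≤ k) : lxFormation n m P 3 k ≤ exSq n P * m :=
  lxFormation_le fun _ hL hLP => (hL.card_le_card_rowInterior hk).trans (card_rowInterior_le hLP)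

end Three

theorem lxFormation_le_of_le_two_pow (P : Finset ((i : Fin d) → Fin (pdims i))) (u : ℕ)
    {j : ℕ} (hm : m ≤ 2 ^ j) :
    lxFormation n m P (u + 3) (2 ^ (u + 1) + 1) ≤ exSq n P * m * (1 + j) ^ u := by
  induction u generalizing j m with
  | zero => simpa using lxFormation_three_le (n := n) (m := m) (P := P) le_rfl
  | succ u ihu =>
    induction j generalizing m with
    | zero =>
      have := Nat.one_le_two_pow (n := u + 1 + 1)
      rw [lxFormation_eq_zero_of_lt (by rw [pow_zero] at hm; omega)]
      exact Nat.zero_le _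
    | succ j ihj =>
      rw [pow_succ] at hm
      obtain ⟨m₁, m₂, rfl, hm₁, hm₂⟩ :
          ∃ m₁ m₂, m = m₁ + m₂ ∧ m₁ ≤ 2 ^ j ∧ m₂ ≤ 2 ^ j :=
        ⟨(m + 1) / 2, m / 2, by omega, by omega, by omega⟩
      set E := exSq n P
      calc lxFormation n (m₁ + m₂) P (u + 3 + 1) (2 ^ (u + 1 + 1) + 1)
          ≤ lxFormation n m₁ P (u + 3 + 1) (2 ^ (u + 1 + 1) + 1) +
              lxFormation n m₂ P (u + 3 + 1) (2 ^ (u + 1 + 1) + 1) +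
              lxFormation n m₁ P (u + 3) (2 ^ (u + 1) + 1) +
              lxFormation n m₂ P (u + 3) (2 ^ (u + 1) + 1) :=
            lxFormation_add_le (by omega) (by positivity) (by rw [pow_succ 2 (u + 1)]; omega)
        _ ≤ E * m₁ * (1 + j) ^ (u + 1) + E * m₂ * (1 + j) ^ (u + 1) +
              E * m₁ * (1 + j) ^ u + E * m₂ * (1 + j) ^ u := by
            gcongr
            exacts [ihj hm₁, ihj hm₂, ihu hm₁, ihu hm₂]
        _ = E * (m₁ + m₂) * ((1 + j) ^ u * (1 + (j + 1))) := by ring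
        _ ≤ E * (m₁ + m₂) * (1 + (j + 1)) ^ (u + 1) := by
            rw [pow_succ]
            gcongr
            omega

/-- for every `s ≥ 3` there is a constant `C` (depending only on `s`) such that
for every positive `d`, every `d`-dimensional 0-1 matrix `P` with at least one one, all
`m ≥ 2`, `n ≥ 1`, with `k = 2^{s-2} + 1`:
`lx_k(n, m, F_{P,s}, d+1) ≤ C · ex(n, P, d) · m · (1 + log₂ m)^{s-3}`. -/
theorem stmt7 (s : ℕ) (hs : 3 ≤ s) :
    ∃ C : ℝ, 0 < C ∧ ∀ (d : ℕ), 0 < d → ∀ (pdims : Fin d → ℕ)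
      (P : Finset ((i : Fin d) → Fin (pdims i))), P.Nonempty →
      ∀ m n : ℕ, 2 ≤ m → 1 ≤ n →
        (lxFormation n m P s (2 ^ (s - 2) + 1) : ℝ)
          ≤ C * (exSq n P : ℝ) * (m : ℝ) * (1 + Real.logb 2 (m : ℝ)) ^ (s - 3) := by
  obtain ⟨u, rfl⟩ : ∃ u, s = u + 3 := ⟨s - 3, by omega⟩
  refine ⟨2 ^ u, by positivity, fun d _ pdims P _ m n hm _ => ?_⟩
  have hbound := lxFormation_le_of_le_two_pow (n := n) P u
    (Nat.lt_pow_succ_log_self one_lt_two m).le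
  have hlog : ((1 + (Nat.log 2 m).succ : ℕ) : ℝ) ≤ 2 * (1 + Real.logb 2 m) := by
    have h₁ := Real.natLog_le_logb m 2
    have h₂ : 0 ≤ Real.logb 2 (m : ℝ) :=
      Real.logb_nonneg one_lt_two (by exact_mod_cast (by omega : 1 ≤ m))
    push_cast at h₁ ⊢
    linarith
  rw [show u + 3 - 2 = u + 1 by omega, Nat.add_sub_cancel]
  calc (lxFormation n m P (u + 3) (2 ^ (u + 1) + 1) : ℝ)
      ≤ exSq n P * m * ((1 + (Nat.log 2 m).succ : ℕ) : ℝ) ^ u := by exact_mod_cast hbound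
    _ ≤ exSq n P * m * (2 * (1 + Real.logb 2 m)) ^ u := by gcongr
    _ = 2 ^ u * exSq n P * m * (1 + Real.logb 2 m) ^ u := by rw [mul_pow]; ring
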